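/- Let K = F_q((x^{-1})), R = F_q[x], and let Λ ≤ K^n be a k-sublattice (1 ≤ k ≤ n). Then Λ has an orthogonal R-basis; moreover, an R-basis of Λ is orthogonal if and only if it is a basis of successive minima (i.e., its elements v_1,…,v_k satisfy ‖v_i‖ = λ_i(Λ) for all i, after reordering by norm). -/

import Mathlib

open scoped NNReal

open Classical in
/-- The absolute value `|f| = q^{-ν(f)}` on `K = Fq((x⁻¹))`, realized as the Laurent series
field `Fq((t))` with `t = x⁻¹`, so that the valuation `ν` is the `t`-adic order. -/
noncomputable def kabs (Fq : Type) [Field Fq] [Fintype Fq] (f : LaurentSeries Fq) : ℝ≥0 :=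
  if f = 0 then 0 else (Fintype.card Fq : ℝ≥0) ^ (-(HahnSeries.order f))

/-- The embedding of the polynomial ring `R = Fq[x]` into `K = Fq((x⁻¹))`, sending `x` to
`t⁻¹`, i.e. to the Laurent series `single (-1) 1`. -/
noncomputable def polyToK (Fq : Type) [Field Fq] [Fintype Fq] (p : Polynomial Fq) :
    LaurentSeries Fq :=
  Polynomial.eval₂ HahnSeries.C (HahnSeries.single (-1 : ℤ) (1 : Fq)) p

/-- The infinity norm on `K^ι`, `K = Fq((x⁻¹))`. -/
noncomputable def vnorm (Fq : Type) [Field Fq] [Fintype Fq] {ι : Type} [Fintype ι]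
    (v : ι → LaurentSeries Fq) : ℝ≥0 :=
  Finset.univ.sup fun i => kabs Fq (v i)

/-- A (finite) family of vectors of `K^ι₁` is orthogonal if its members are nonzero and the
norm of any linear combination of them is the maximum of the norms of the summands. -/
def IsOrthTuple (Fq : Type) [Field Fq] [Fintype Fq] {ι₁ ι₂ : Type} [Fintype ι₁] [Fintype ι₂]
    (u : ι₂ → ι₁ → LaurentSeries Fq) : Prop :=
  (∀ j, u j ≠ 0) ∧
    ∀ c : ι₂ → LaurentSeries Fq,
      vnorm Fq (∑ j, c j • u j) = Finset.univ.sup fun j => vnorm Fq (c j • u j)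

/-- A square matrix over `R = Fq[x]` is `(l, q^m)`-Hadamard if its entries have degree at
most `l`, its columns form an orthogonal set in `K^ι`, and `|det| = q^m`. -/
def IsHadamard (Fq : Type) [Field Fq] [Fintype Fq] {ι : Type} [Fintype ι] [DecidableEq ι]
    (l m : ℕ) (A : Matrix ι ι (Polynomial Fq)) : Prop :=
  (∀ i j, (A i j).degree ≤ (l : ℕ)) ∧
    IsOrthTuple Fq (fun j i => polyToK Fq (A i j)) ∧
    kabs Fq (polyToK Fq A.det) = (Fintype.card Fq : ℝ≥0) ^ m

/-- `v` is an `R`-basis of the `k`-sublattice `Λ` of `K^n` (`R = Fq[x]`, `K = Fq((x⁻¹))`):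
the vectors `v j` are `K`-linearly independent and `Λ = R v 0 ⊕ ⋯ ⊕ R v (k-1)`. -/
def IsKSublatticeBasis (Fq : Type) [Field Fq] [Fintype Fq] {n k : ℕ}
    (Λ : Set (Fin n → LaurentSeries Fq)) (v : Fin k → Fin n → LaurentSeries Fq) : Prop :=
  LinearIndependent (LaurentSeries Fq) v ∧
    Λ = {w | ∃ a : Fin k → Polynomial Fq, w = ∑ j, polyToK Fq (a j) • v j}

/-- A subset `Λ` of `K^n` is a `k`-sublattice if it is the `R`-span of `k` `K`-linearly
independent vectors. -/
def IsKSublattice (Fq : Type) [Field Fq] [Fintype Fq] (k : ℕ) {n : ℕ}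
    (Λ : Set (Fin n → LaurentSeries Fq)) : Prop :=
  ∃ v : Fin k → Fin n → LaurentSeries Fq, IsKSublatticeBasis Fq Λ v

/-- The `i`-th successive minimum of `Λ ≤ K^n`: the infimum of `r > 0` such that `Λ`
contains `i` linearly independent vectors of norm at most `r`. -/
noncomputable def sminima (Fq : Type) [Field Fq] [Fintype Fq] {n : ℕ}
    (Λ : Set (Fin n → LaurentSeries Fq)) (i : ℕ) : ℝ≥0 :=
  sInf {r : ℝ≥0 | ∃ w : Fin i → Fin n → LaurentSeries Fq,
    (∀ j, w j ∈ Λ) ∧ LinearIndependent (LaurentSeries Fq) w ∧ ∀ j, vnorm Fq (w j) ≤ r}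

/-!
Write `vnorm v = q ^ (-vorder v)`, and call the vector of coefficients of `t ^ vorder v` in the
coordinates of `v` its leading coefficient vector. Nonzero vectors are orthogonal exactly when
their leading coefficient vectors are linearly independent over `Fq`: a nontrivial relation,
rescaled by powers of `t`, yields a combination whose norm drops below the largest norm of its
terms, while otherwise the coefficient of lowest order of a combination is a nontrivial
combination of leading coefficient vectors.

If a basis of `Λ` is not orthogonal, such a relation, rescaled around a basis vector of largest
norm among those involved, uses only polynomial coefficients and a unit coefficient at that
vector, so replacing the vector by the combination gives a basis of `Λ` with a smaller product of
norms. Norms of nonzero lattice vectors are bounded below, so a basis with the least product of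
norms exists, and it is orthogonal. For an orthogonal basis, a lattice vector of norm `< r` lies
in the span of the basis vectors of norm `< r`, so the sorted norms are the successive minima.
Conversely, the sorted norms of any basis dominate the successive minima, so a basis of
successive minima has the least product of norms and is orthogonal.
-/

open Finset

namespace HahnSeries

variable {Γ R : Type*} [AddCommMonoid Γ] [LinearOrder Γ] [IsOrderedCancelAddMonoid Γ]
  [Semiring R]

theorem coeff_mul_add_of_le_orderTop {x y : HahnSeries Γ R} {a b : Γ}
    (ha : (a : WithTop Γ) ≤ x.orderTop) (hb : (b : WithTop Γ) ≤ y.orderTop) :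
    (x * y).coeff (a + b) = x.coeff a * y.coeff b := by
  rcases eq_or_ne x 0 with rfl | hx
  · simp
  rcases eq_or_ne y 0 with rfl | hy
  · simp
  rw [← order_eq_orderTop_of_ne_zero hx, WithTop.coe_le_coe] at ha
  rw [← order_eq_orderTop_of_ne_zero hy, WithTop.coe_le_coe] at hb
  by_cases hab : a = x.order ∧ b = y.order
  · obtain ⟨rfl, rfl⟩ := hab
    rw [coeff_mul_order_add_order, leadingCoeff_eq, leadingCoeff_eq]
  have hlt : ((a + b : Γ) : WithTop Γ) < (x * y).orderTop := by
    refine lt_of_lt_of_le ?_ orderTop_add_le_mul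
    rw [← order_eq_orderTop_of_ne_zero hx, ← order_eq_orderTop_of_ne_zero hy, ← WithTop.coe_add,
      WithTop.coe_lt_coe]
    exact lt_of_le_of_ne (add_le_add ha hb) fun h => hab ((add_eq_add_iff_eq_and_eq ha hb).1 h)
  rw [coeff_eq_zero_of_lt_orderTop hlt]
  rcases not_and_or.1 hab with h | h
  · rw [coeff_eq_zero_of_lt_order (lt_of_le_of_ne ha h), zero_mul]
  · rw [coeff_eq_zero_of_lt_order (lt_of_le_of_ne hb h), mul_zero]

end HahnSeries

theorem Fintype.sum_smul_update {S M ι : Type*} [CommSemiring S] [AddCommMonoid M] [Module S M]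
    [Fintype ι] [DecidableEq ι] (u : ι → M) (d P : ι → S) (j₀ : ι) :
    ∑ j, d j • Function.update u j₀ (∑ l, P l • u l) j =
      ∑ j, (Function.update d j₀ 0 j + d j₀ * P j) • u j := by
  have h (w : M) (c : S) (j : ι) : Function.update d j₀ c j • Function.update u j₀ w j =
      Function.update (fun j => d j • u j) j₀ (c • w) j := by
    rcases eq_or_ne j j₀ with rfl | hj <;> simp [*]
  have hw := h (∑ l, P l • u l) (d j₀)
  have h0 := h (u j₀) 0
  simp only [Function.update_eq_self, zero_smul] at hw h0
  simp only [add_smul, sum_add_distrib, mul_smul, ← smul_sum, hw, h0,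
    sum_update_of_mem (mem_univ j₀), zero_add, add_comm]

theorem Tuple.card_filter_lt_apply_sort_le {α : Type*} [LinearOrder α] {k : ℕ} (f : Fin k → α)
    (i : Fin k) : #{j | f j < f (Tuple.sort f i)} ≤ i := by
  calc #{j | f j < f (Tuple.sort f i)} ≤ #(Finset.Iio i) := by
        refine Finset.card_le_card_of_injOn (Tuple.sort f).symm (fun j hj => ?_)
          (Tuple.sort f).symm.injective.injOn
        simp only [Finset.coe_filter, Finset.mem_univ, true_and, Set.mem_ofPred_eq] at hj
        simp only [Finset.coe_Iio, Set.mem_Iio]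
        by_contra! h
        have := Tuple.monotone_sort f h
        simp only [Function.comp_apply, Equiv.apply_symm_apply] at this
        exact this.not_gt hj
    _ = i := Fin.card_Iio i

section VectorOrder

variable {Fq : Type} [Field Fq] {ι : Type} [Fintype ι]

local notation "K" => LaurentSeries Fq

open Classical in
noncomputable def vorder (v : ι → K) : ℤ :=
  if h : v = 0 then 0
  else ({i | v i ≠ 0} : Finset ι).inf' (by simpa [Finset.Nonempty, funext_iff] using h)
    fun i => (v i).order

noncomputable def vleadingCoeff (v : ι → K) : ι → Fq :=
  fun i => (v i).coeff (vorder v)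

theorem vorder_le_orderTop (v : ι → K) (i : ι) : (vorder v : WithTop ℤ) ≤ (v i).orderTop := by
  rcases eq_or_ne (v i) 0 with hi | hi
  · simp [hi]
  have hv : v ≠ 0 := fun h => hi (by simp [h])
  rw [← HahnSeries.order_eq_orderTop_of_ne_zero hi, WithTop.coe_le_coe, vorder, dif_neg hv]
  exact inf'_le _ (by simpa using hi)

end VectorOrder

section Norm

variable {Fq : Type} [Field Fq] [Fintype Fq]

local notation "K" => LaurentSeries Fq
local notation "q" => (Fintype.card Fq : ℝ≥0)

theorem one_lt_card_nnreal : 1 < q := by exact_mod_cast Fintype.one_lt_card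

theorem card_pos_nnreal : 0 < q := zero_lt_one.trans one_lt_card_nnreal

theorem zpow_card_pos (m : ℤ) : 0 < q ^ m := zpow_pos card_pos_nnreal m

theorem zpow_card_strictAnti : StrictAnti fun m : ℤ => q ^ (-m) :=
  fun _ _ h => zpow_lt_zpow_right₀ one_lt_card_nnreal (neg_lt_neg h)

@[simp] theorem kabs_zero : kabs Fq 0 = 0 := if_pos rfl

theorem kabs_of_ne_zero {f : K} (hf : f ≠ 0) : kabs Fq f = q ^ (-f.order) := if_neg hf

theorem kabs_mul (f g : K) : kabs Fq (f * g) = kabs Fq f * kabs Fq g := by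
  rcases eq_or_ne f 0 with rfl | hf
  · simp
  rcases eq_or_ne g 0 with rfl | hg
  · simp
  rw [kabs_of_ne_zero hf, kabs_of_ne_zero hg, kabs_of_ne_zero (mul_ne_zero hf hg),
    HahnSeries.order_mul hf hg, neg_add, zpow_add₀ card_pos_nnreal.ne']

theorem kabs_add_le (f g : K) : kabs Fq (f + g) ≤ max (kabs Fq f) (kabs Fq g) := by
  rcases eq_or_ne f 0 with rfl | hf
  · simp
  rcases eq_or_ne g 0 with rfl | hg
  · simp
  rcases eq_or_ne (f + g) 0 with hfg | hfg
  · simp [hfg]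
  rw [kabs_of_ne_zero hf, kabs_of_ne_zero hg, kabs_of_ne_zero hfg,
    ← zpow_card_strictAnti.antitone.map_min]
  exact zpow_card_strictAnti.antitone (HahnSeries.min_order_le_order_add hfg)

theorem kabs_lt_zpow_iff {f : K} {m : ℤ} : kabs Fq f < q ^ (-m) ↔ ∀ n ≤ m, f.coeff n = 0 := by
  rcases eq_or_ne f 0 with rfl | hf
  · simpa using zpow_card_pos (-m)
  rw [kabs_of_ne_zero hf, zpow_card_strictAnti.lt_iff_gt]
  refine ⟨fun h n hn => HahnSeries.coeff_eq_zero_of_lt_order (hn.trans_lt h), fun h => ?_⟩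
  by_contra! hle
  exact hf (HahnSeries.coeff_order_eq_zero.1 (h _ hle))

variable {ι : Type} [Fintype ι]

@[simp] theorem vnorm_zero : vnorm Fq (0 : ι → K) = 0 := by simp [vnorm]

theorem vnorm_smul (c : K) (v : ι → K) : vnorm Fq (c • v) = kabs Fq c * vnorm Fq v := by
  simp only [vnorm, NNReal.mul_finset_sup, Pi.smul_apply, smul_eq_mul, kabs_mul]

theorem vnorm_sum_le {α : Type*} (s : Finset α) (f : α → ι → K) :
    vnorm Fq (∑ a ∈ s, f a) ≤ s.sup fun a => vnorm Fq (f a) := by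
  induction s using Finset.cons_induction with
  | empty => simp [vnorm]
  | cons a s ha ih =>
    rw [sum_cons, sup_cons]
    refine Finset.sup_le fun i hi => (kabs_add_le _ _).trans (max_le_max ?_ (le_trans ?_ ih))
    · exact le_sup (f := fun i => kabs Fq (f a i)) hi
    · exact le_sup (f := fun i => kabs Fq ((∑ b ∈ s, f b) i)) hi

theorem vnorm_lt_zpow_iff {v : ι → K} {m : ℤ} :
    vnorm Fq v < q ^ (-m) ↔ ∀ i, ∀ n ≤ m, (v i).coeff n = 0 := by
  simp only [vnorm, Finset.sup_lt_iff (zpow_card_pos _),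
    mem_univ, true_implies, kabs_lt_zpow_iff]

theorem vnorm_lt_zpow_of_le {v : ι → K} {m : ℤ} (hle : vnorm Fq v ≤ q ^ (-m))
    (hm : ∀ i, (v i).coeff m = 0) : vnorm Fq v < q ^ (-m) := by
  refine vnorm_lt_zpow_iff.2 fun i n hn => ?_
  rcases hn.lt_or_eq with hn | rfl
  · exact vnorm_lt_zpow_iff.1 (hle.trans_lt (zpow_card_strictAnti (sub_one_lt m))) i n
      (Int.le_sub_one_of_lt hn)
  · exact hm i

theorem vnorm_eq_zpow {v : ι → K} (hv : v ≠ 0) : vnorm Fq v = q ^ (-vorder v) := by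
  classical
  obtain ⟨i, hi, hmin⟩ := exists_mem_eq_inf' (s := ({i | v i ≠ 0} : Finset ι))
    (by simpa [Finset.Nonempty, funext_iff] using hv) fun i => (v i).order
  have hvi : vorder v = (v i).order := by rw [vorder, dif_neg hv, hmin]
  refine le_antisymm (Finset.sup_le fun j _ => ?_) ?_
  · rcases eq_or_ne (v j) 0 with hj | hj
    · simp [hj]
    rw [kabs_of_ne_zero hj]
    refine zpow_card_strictAnti.antitone ?_
    rw [vorder, dif_neg hv]
    exact inf'_le _ (by simpa using hj)
  · rw [hvi, ← kabs_of_ne_zero (by simpa using hi)]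
    exact le_sup (f := fun i => kabs Fq (v i)) (mem_univ i)

theorem vnorm_ne_zero {v : ι → K} (hv : v ≠ 0) : vnorm Fq v ≠ 0 := by
  rw [vnorm_eq_zpow hv]
  exact (zpow_card_pos _).ne'

theorem vnorm_lt_vnorm_iff {v w : ι → K} (hv : v ≠ 0) (hw : w ≠ 0) :
    vnorm Fq v < vnorm Fq w ↔ vorder w < vorder v := by
  rw [vnorm_eq_zpow hv, vnorm_eq_zpow hw, zpow_card_strictAnti.lt_iff_gt]

theorem exists_vnorm_map_le {ι κ : Type} [Fintype ι] [Fintype κ] (ψ : (ι → K) →ₗ[K] (κ → K)) :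
    ∃ C, ∀ w, vnorm Fq (ψ w) ≤ C * vnorm Fq w := by
  classical
  refine ⟨univ.sup fun i => vnorm Fq (ψ fun j => if i = j then 1 else 0), fun w => ?_⟩
  rw [LinearMap.pi_apply_eq_sum_univ ψ w]
  refine (vnorm_sum_le _ _).trans (Finset.sup_le fun i _ => ?_)
  rw [vnorm_smul, mul_comm]
  exact mul_le_mul' (le_sup (f := fun i => vnorm Fq (ψ fun j => if i = j then 1 else 0))
    (mem_univ i)) (le_sup (f := fun i => kabs Fq (w i)) (mem_univ i))

theorem prod_vnorm_update_lt {κ : Type} [Fintype κ] [DecidableEq κ] {u : κ → ι → K} {j₀ : κ}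
    {w : ι → K} (hu : ∀ j, Function.update u j₀ w j ≠ 0) (hlt : vnorm Fq w < vnorm Fq (u j₀)) :
    ∏ j, vnorm Fq (Function.update u j₀ w j) < ∏ j, vnorm Fq (u j) := by
  refine prod_lt_prod (fun j _ => pos_iff_ne_zero.2 (vnorm_ne_zero (hu j))) (fun j _ => ?_)
    ⟨j₀, mem_univ _, by simpa using hlt⟩
  rcases eq_or_ne j j₀ with rfl | hj
  · simpa using hlt.le
  · simp [hj]

theorem sum_vorder_lt_sum_vorder_update {κ : Type} [Fintype κ] [DecidableEq κ] {u : κ → ι → K}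
    {j₀ : κ} {w : ι → K} (hu : ∀ j, u j ≠ 0) (hw : w ≠ 0) (hlt : vnorm Fq w < vnorm Fq (u j₀)) :
    ∑ j, vorder (u j) < ∑ j, vorder (Function.update u j₀ w j) := by
  have hlt' := (vnorm_lt_vnorm_iff hw (hu j₀)).1 hlt
  refine sum_lt_sum (fun j _ => ?_) ⟨j₀, mem_univ _, by simpa using hlt'⟩
  rcases eq_or_ne j j₀ with rfl | hj
  · simpa using hlt'.le
  · simp [hj]

theorem vnorm_smul_of_ne_zero {c : K} {v : ι → K} (hc : c ≠ 0) (hv : v ≠ 0) :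
    vnorm Fq (c • v) = q ^ (-(c.order + vorder v)) := by
  rw [vnorm_smul, kabs_of_ne_zero hc, vnorm_eq_zpow hv, neg_add,
    zpow_add₀ card_pos_nnreal.ne']

theorem vnorm_single_smul {v : ι → K} {γ : Fq} (hv : v ≠ 0) (hγ : γ ≠ 0) (m : ℤ) :
    vnorm Fq (HahnSeries.single (m - vorder v) γ • v) = q ^ (-m) := by
  rw [vnorm_smul_of_ne_zero (HahnSeries.single_ne_zero hγ) hv, HahnSeries.order_single hγ,
    sub_add_cancel]

theorem coeff_smul_apply_of_vnorm_le {c : K} {v : ι → K} {m : ℤ}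
    (h : vnorm Fq (c • v) ≤ q ^ (-m)) (i : ι) :
    ((c • v) i).coeff m = c.coeff (m - vorder v) * vleadingCoeff v i := by
  rcases eq_or_ne c 0 with rfl | hc
  · simp
  rcases eq_or_ne v 0 with rfl | hv
  · simp [vleadingCoeff]
  rw [vnorm_smul_of_ne_zero hc hv, zpow_card_strictAnti.le_iff_ge] at h
  have hle : ((m - vorder v : ℤ) : WithTop ℤ) ≤ c.orderTop := by
    rw [← HahnSeries.order_eq_orderTop_of_ne_zero hc, WithTop.coe_le_coe]
    omega
  simpa [vleadingCoeff] using HahnSeries.coeff_mul_add_of_le_orderTop hle (vorder_le_orderTop v i)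

end Norm

section Orthogonality

variable {Fq : Type} [Field Fq] [Fintype Fq]

local notation "K" => LaurentSeries Fq
local notation "q" => (Fintype.card Fq : ℝ≥0)

variable {ι₁ ι₂ : Type} [Fintype ι₁] [Fintype ι₂]

theorem coeff_sum_smul_apply_of_vnorm_le {c : ι₂ → K} {u : ι₂ → ι₁ → K} {m : ℤ}
    (h : ∀ j, vnorm Fq (c j • u j) ≤ q ^ (-m)) (i : ι₁) :
    ((∑ j, c j • u j) i).coeff m = ∑ j, (c j).coeff (m - vorder (u j)) * vleadingCoeff (u j) i := by
  simp only [Finset.sum_apply, HahnSeries.coeff_sum, coeff_smul_apply_of_vnorm_le (h _)]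

theorem vnorm_sum_single_smul_lt {u : ι₂ → ι₁ → K} {γ : ι₂ → Fq}
    (hγ : ∑ j, γ j • vleadingCoeff (u j) = 0) (m : ℤ) :
    vnorm Fq (∑ j, HahnSeries.single (m - vorder (u j)) (γ j) • u j) < q ^ (-m) := by
  have hle (j : ι₂) : vnorm Fq (HahnSeries.single (m - vorder (u j)) (γ j) • u j) ≤ q ^ (-m) := by
    rcases eq_or_ne (γ j) 0 with h | h
    · simp [h]
    rcases eq_or_ne (u j) 0 with hu | hu
    · simp [hu]
    exact (vnorm_single_smul hu h m).le
  refine vnorm_lt_zpow_of_le ((vnorm_sum_le _ _).trans (Finset.sup_le fun j _ => hle j)) fun i => ?_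
  rw [coeff_sum_smul_apply_of_vnorm_le hle]
  simpa using congrFun hγ i

theorem isOrthTuple_iff_linearIndependent_vleadingCoeff {u : ι₂ → ι₁ → K} (hu : ∀ j, u j ≠ 0) :
    IsOrthTuple Fq u ↔ LinearIndependent Fq fun j => vleadingCoeff (u j) := by
  refine ⟨fun ho => Fintype.linearIndependent_iff.2 fun γ hγ j₀ => ?_, fun hli => ⟨hu, fun c => ?_⟩⟩
  · by_contra hj₀
    have hlt := vnorm_sum_single_smul_lt hγ 0
    rw [ho.2] at hlt
    refine hlt.not_ge ?_
    rw [← vnorm_single_smul (hu j₀) hj₀ 0]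
    exact le_sup (f := fun j => vnorm Fq (HahnSeries.single (0 - vorder (u j)) (γ j) • u j))
      (mem_univ j₀)
  classical
  rcases ({j | c j ≠ 0} : Finset ι₂).eq_empty_or_nonempty with h | h
  · have hc (j : ι₂) : c j = 0 := by simpa using Finset.filter_eq_empty_iff.1 h (mem_univ j)
    simp [hc, ← bot_eq_zero']
  obtain ⟨j₁, hj₁, hmin⟩ := exists_min_image _ (fun j => (c j).order + vorder (u j)) h
  set m := (c j₁).order + vorder (u j₁)
  have hle (j : ι₂) : vnorm Fq (c j • u j) ≤ q ^ (-m) := by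
    rcases eq_or_ne (c j) 0 with hj | hj
    · simp [hj]
    rw [vnorm_smul_of_ne_zero hj (hu j)]
    exact zpow_card_strictAnti.antitone (hmin j (by simpa using hj))
  refine le_antisymm (vnorm_sum_le _ _) ((Finset.sup_le fun j _ => hle j).trans ?_)
  by_contra! hlt
  have hcoeff := Fintype.linearIndependent_iff.1 hli (fun j => (c j).coeff (m - vorder (u j)))
    (funext fun i => by
      simpa [← coeff_sum_smul_apply_of_vnorm_le hle] using vnorm_lt_zpow_iff.1 hlt i m le_rfl) j₁
  simp only [m, add_sub_cancel_right] at hcoeff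
  exact (by simpa using hj₁ : c j₁ ≠ 0) (HahnSeries.coeff_order_eq_zero.1 hcoeff)

end Orthogonality

section Lattice

variable {Fq : Type} [Field Fq] [Fintype Fq]

local notation "K" => LaurentSeries Fq
local notation "q" => (Fintype.card Fq : ℝ≥0)

@[simp] theorem polyToK_zero : polyToK Fq 0 = 0 := Polynomial.eval₂_zero _ _

theorem polyToK_add (p r : Polynomial Fq) : polyToK Fq (p + r) = polyToK Fq p + polyToK Fq r :=
  Polynomial.eval₂_add _ _

theorem polyToK_mul (p r : Polynomial Fq) : polyToK Fq (p * r) = polyToK Fq p * polyToK Fq r :=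
  Polynomial.eval₂_mul _ _

theorem polyToK_monomial (e : ℕ) (γ : Fq) :
    polyToK Fq (Polynomial.monomial e γ) = HahnSeries.single (-(e : ℤ)) γ := by
  simp [polyToK, Polynomial.eval₂_monomial, HahnSeries.single_pow, HahnSeries.C_apply]

theorem coeff_polyToK (p : Polynomial Fq) (e : ℕ) :
    (polyToK Fq p).coeff (-(e : ℤ)) = p.coeff e := by
  induction p using Polynomial.induction_on' with
  | add p r hp hr => rw [polyToK_add, HahnSeries.coeff_add, hp, hr, Polynomial.coeff_add]
  | monomial e' γ =>
    simp [polyToK_monomial, HahnSeries.coeff_single, Polynomial.coeff_monomial, eq_comm]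

theorem one_le_kabs_polyToK {p : Polynomial Fq} (hp : p ≠ 0) : 1 ≤ kabs Fq (polyToK Fq p) := by
  rw [← zpow_zero q, ← neg_zero, ← not_lt, kabs_lt_zpow_iff]
  exact fun h => hp (Polynomial.leadingCoeff_eq_zero.1 (by
    rw [Polynomial.leadingCoeff, ← coeff_polyToK, h _ (by simp)]))

variable {n k : ℕ} {Λ : Set (Fin n → LaurentSeries Fq)} {u : Fin k → Fin n → LaurentSeries Fq}

theorem IsKSublatticeBasis.mem (hb : IsKSublatticeBasis Fq Λ u) (j : Fin k) : u j ∈ Λ := by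
  classical
  rw [hb.2]
  refine ⟨Pi.single j 1, ?_⟩
  rw [Finset.sum_eq_single j (fun l _ hl => by simp [hl]) (by simp)]
  simp [polyToK]

theorem IsKSublatticeBasis.update (hb : IsKSublatticeBasis Fq Λ u) {p : Fin k → Polynomial Fq}
    {j₀ : Fin k} (hp : IsUnit (p j₀)) :
    IsKSublatticeBasis Fq Λ (Function.update u j₀ (∑ j, polyToK Fq (p j) • u j)) := by
  classical
  have hpoly (b : Fin k → Polynomial Fq) :
      ∑ j, polyToK Fq (b j) • Function.update u j₀ (∑ j, polyToK Fq (p j) • u j) j =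
        ∑ j, polyToK Fq (Function.update b j₀ 0 j + b j₀ * p j) • u j := by
    rw [Fintype.sum_smul_update]
    refine Finset.sum_congr rfl fun j _ => ?_
    rcases eq_or_ne j j₀ with rfl | hj <;> simp [polyToK_add, polyToK_mul, *]
  refine ⟨Fintype.linearIndependent_iff.2 fun d hd => ?_, ?_⟩
  · rw [Fintype.sum_smul_update] at hd
    have h := Fintype.linearIndependent_iff.1 hb.1 _ hd
    have hp₀ : polyToK Fq (p j₀) ≠ 0 := fun h => by
      simpa [h] using one_le_kabs_polyToK hp.ne_zero
    have h₀ : d j₀ = 0 := by simpa [hp₀] using h j₀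
    intro j
    rcases eq_or_ne j j₀ with rfl | hj
    · exact h₀
    · simpa [hj, h₀] using h j
  rw [hb.2]
  ext w
  refine ⟨fun ⟨a, ha⟩ => ?_, fun ⟨b, hb⟩ => ⟨_, hb.trans (hpoly b)⟩⟩
  let c := a j₀ * ↑hp.unit⁻¹
  refine ⟨Function.update (fun j => a j - c * p j) j₀ c, ha.trans ?_⟩
  rw [hpoly]
  refine Finset.sum_congr rfl fun j _ => ?_
  rcases eq_or_ne j j₀ with rfl | hj
  · simp [c, mul_assoc]
  · simp [hj]

theorem IsKSublatticeBasis.exists_vorder_le (hb : IsKSublatticeBasis Fq Λ u) :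
    ∃ N : ℤ, ∀ w ∈ Λ, w ≠ 0 → vorder w ≤ N := by
  obtain ⟨ψ, hψ⟩ := (Fintype.linearCombination K u).exists_leftInverse_of_injective
    (LinearMap.ker_eq_bot.2 (linearIndependent_iff_injective_fintypeLinearCombination.1 hb.1))
  obtain ⟨C, hC⟩ := exists_vnorm_map_le ψ
  obtain ⟨N, hN⟩ := pow_unbounded_of_one_lt C (one_lt_card_nnreal (Fq := Fq))
  refine ⟨N, fun w hw hw0 => ?_⟩
  rw [hb.2] at hw
  obtain ⟨a, rfl⟩ := hw
  obtain ⟨j, hj⟩ : ∃ j, a j ≠ 0 := by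
    by_contra! h
    simp [h] at hw0
  have hψa : ψ (∑ j, polyToK Fq (a j) • u j) = fun j => polyToK Fq (a j) := by
    rw [← Fintype.linearCombination_apply, ← LinearMap.comp_apply, hψ, LinearMap.id_apply]
  have h1 : 1 ≤ C * (q ^ vorder (∑ j, polyToK Fq (a j) • u j))⁻¹ := by
    calc 1 ≤ kabs Fq (polyToK Fq (a j)) := one_le_kabs_polyToK hj
      _ ≤ vnorm Fq (ψ (∑ j, polyToK Fq (a j) • u j)) := by
        rw [hψa]; exact le_sup (f := fun j => kabs Fq (polyToK Fq (a j))) (mem_univ j)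
      _ ≤ _ := by rw [← zpow_neg, ← vnorm_eq_zpow hw0]; exact hC _
  rw [le_mul_inv_iff₀ (zpow_card_pos _), one_mul] at h1
  exact ((zpow_lt_zpow_iff_right₀ one_lt_card_nnreal).1 (h1.trans_lt (by exact_mod_cast hN))).le

theorem IsKSublatticeBasis.exists_update_vnorm_lt (hb : IsKSublatticeBasis Fq Λ u)
    (ho : ¬ IsOrthTuple Fq u) :
    ∃ j₀ w, IsKSublatticeBasis Fq Λ (Function.update u j₀ w) ∧ vnorm Fq w < vnorm Fq (u j₀) := by
  classical
  rw [isOrthTuple_iff_linearIndependent_vleadingCoeff hb.1.ne_zero,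
    Fintype.not_linearIndependent_iff] at ho
  obtain ⟨γ, hγ, j₁, hj₁⟩ := ho
  obtain ⟨j₀, hj₀, hmin⟩ := exists_min_image ({j | γ j ≠ 0} : Finset (Fin k))
    (fun j => vorder (u j)) ⟨j₁, by simpa using hj₁⟩
  -- `j₀` minimises `vorder` on the support of `γ`, so `t ^ (vorder (u j₀) - vorder (u j))` is a
  -- power of `x = t⁻¹` whenever `γ j ≠ 0`.
  let p j := Polynomial.monomial (vorder (u j) - vorder (u j₀)).toNat (γ j)
  have hp (j : Fin k) :
      polyToK Fq (p j) = HahnSeries.single (vorder (u j₀) - vorder (u j)) (γ j) := by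
    rw [polyToK_monomial]
    rcases eq_or_ne (γ j) 0 with h | h
    · simp [h]
    have := hmin j (by simpa using h)
    congr 2
    omega
  refine ⟨j₀, _, hb.update (p := p) (by simpa [p] using hj₀), ?_⟩
  simp only [hp]
  rw [vnorm_eq_zpow (hb.1.ne_zero j₀)]
  exact vnorm_sum_single_smul_lt hγ _

theorem IsKSublattice.exists_isOrthTuple_basis (hΛ : IsKSublattice Fq k Λ) :
    ∃ u : Fin k → Fin n → K, IsKSublatticeBasis Fq Λ u ∧ IsOrthTuple Fq u := by
  obtain ⟨v, hv⟩ := hΛ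
  obtain ⟨N, hN⟩ := hv.exists_vorder_le
  obtain ⟨_, ⟨u, hu, rfl⟩, hmax⟩ := Int.exists_greatest_of_bdd
    (P := fun z => ∃ u, IsKSublatticeBasis Fq Λ u ∧ ∑ j, vorder (u j) = z)
    ⟨k * N, fun _ ⟨u, hu, hz⟩ => hz ▸ (sum_le_sum fun j _ => hN _ (hu.mem j) (hu.1.ne_zero j)).trans
      (by simp)⟩ ⟨_, v, hv, rfl⟩
  refine ⟨u, hu, by_contra fun ho => ?_⟩
  obtain ⟨j₀, w, hu', hlt⟩ := hu.exists_update_vnorm_lt ho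
  have hw : w ≠ 0 := by simpa using hu'.1.ne_zero j₀
  exact (hmax _ ⟨_, hu', rfl⟩).not_gt (sum_vorder_lt_sum_vorder_update hu.1.ne_zero hw hlt)

theorem IsKSublatticeBasis.exists_family_le_vnorm_sort (hb : IsKSublatticeBasis Fq Λ u)
    (i : Fin k) :
    ∃ w : Fin (i + 1) → Fin n → K, (∀ m, w m ∈ Λ) ∧ LinearIndependent K w ∧
      ∀ m, vnorm Fq (w m) ≤ vnorm Fq (u (Tuple.sort (fun j => vnorm Fq (u j)) i)) := by
  let σ := Tuple.sort fun j => vnorm Fq (u j)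
  refine ⟨fun m => u (σ (Fin.castLE i.isLt m)), fun m => hb.mem _,
    hb.1.comp _ (σ.injective.comp (Fin.castLE_injective _)), fun m => ?_⟩
  exact Tuple.monotone_sort (fun j => vnorm Fq (u j)) (Fin.le_def.2 (by simp; omega))

theorem IsKSublatticeBasis.sminima_le_vnorm_sort (hb : IsKSublatticeBasis Fq Λ u) (i : Fin k) :
    sminima Fq Λ (i + 1) ≤ vnorm Fq (u (Tuple.sort (fun j => vnorm Fq (u j)) i)) :=
  csInf_le (OrderBot.bddBelow _) (hb.exists_family_le_vnorm_sort i)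

theorem IsKSublatticeBasis.prod_sminima_le (hb : IsKSublatticeBasis Fq Λ u) :
    ∏ i : Fin k, sminima Fq Λ (i + 1) ≤ ∏ j, vnorm Fq (u j) :=
  (prod_le_prod' fun i _ => hb.sminima_le_vnorm_sort i).trans_eq
    (Equiv.prod_comp _ fun j => vnorm Fq (u j))

theorem IsOrthTuple.mem_span_of_mem (ho : IsOrthTuple Fq u) (hb : IsKSublatticeBasis Fq Λ u)
    {w : Fin n → K} (hw : w ∈ Λ) :
    w ∈ Submodule.span K (u '' {j | vnorm Fq (u j) ≤ vnorm Fq w}) := by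
  rw [hb.2] at hw
  obtain ⟨a, rfl⟩ := hw
  refine Submodule.sum_mem _ fun j _ => ?_
  rcases eq_or_ne (a j) 0 with h | h
  · simp [h]
  refine Submodule.smul_mem _ _ (Submodule.subset_span ⟨j, ?_, rfl⟩)
  calc vnorm Fq (u j) ≤ kabs Fq (polyToK Fq (a j)) * vnorm Fq (u j) :=
        le_mul_of_one_le_left (by positivity) (one_le_kabs_polyToK h)
    _ = vnorm Fq (polyToK Fq (a j) • u j) := (vnorm_smul _ _).symm
    _ ≤ vnorm Fq (∑ j, polyToK Fq (a j) • u j) := by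
        rw [ho.2]; exact le_sup (f := fun j => vnorm Fq (polyToK Fq (a j) • u j)) (mem_univ j)

theorem IsOrthTuple.vnorm_sort_le_sminima (ho : IsOrthTuple Fq u) (hb : IsKSublatticeBasis Fq Λ u)
    (i : Fin k) : vnorm Fq (u (Tuple.sort (fun j => vnorm Fq (u j)) i)) ≤ sminima Fq Λ (i + 1) := by
  classical
  refine le_csInf ⟨_, hb.exists_family_le_vnorm_sort i⟩ fun r ⟨w, hwΛ, hwli, hwr⟩ => ?_
  by_contra! hr
  let f j := vnorm Fq (u j)
  let J : Finset (Fin k) := {j | f j < f (Tuple.sort f i)}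
  have hspan : Set.range w ⊆ Submodule.span K (J.image u : Set (Fin n → K)) := by
    rintro _ ⟨m, rfl⟩
    refine Submodule.span_mono ?_ (ho.mem_span_of_mem hb (hwΛ m))
    rintro _ ⟨j, hj, rfl⟩
    simpa [J] using ⟨j, (hj.trans (hwr m)).trans_lt hr, rfl⟩
  have hcard := linearIndependent_le_span' w hwli _ hspan
  simp only [Cardinal.mk_fintype, Fintype.card_fin, Finset.coe_sort_coe, Fintype.card_coe,
    Nat.cast_le] at hcard
  have hJ := (card_image_le (s := J) (f := u)).trans (Tuple.card_filter_lt_apply_sort_le f i)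
  omega

theorem IsOrthTuple.vnorm_sort_eq_sminima (ho : IsOrthTuple Fq u) (hb : IsKSublatticeBasis Fq Λ u)
    (i : Fin k) : vnorm Fq (u (Tuple.sort (fun j => vnorm Fq (u j)) i)) = sminima Fq Λ (i + 1) :=
  le_antisymm (ho.vnorm_sort_le_sminima hb i) (hb.sminima_le_vnorm_sort i)

end Lattice

theorem sublattice_orthogonal_basis_general (Fq : Type) [Field Fq] [Fintype Fq] (n k : ℕ)
    (Λ : Set (Fin n → LaurentSeries Fq)) (hΛ : IsKSublattice Fq k Λ) :
    (∃ u : Fin k → Fin n → LaurentSeries Fq, IsKSublatticeBasis Fq Λ u ∧ IsOrthTuple Fq u) ∧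
      ∀ u : Fin k → Fin n → LaurentSeries Fq, IsKSublatticeBasis Fq Λ u →
        (IsOrthTuple Fq u ↔
          ∃ σ : Equiv.Perm (Fin k), ∀ i : Fin k, vnorm Fq (u (σ i)) = sminima Fq Λ (i + 1)) := by
  refine ⟨hΛ.exists_isOrthTuple_basis, fun u hb => ⟨fun ho => ⟨_, ho.vnorm_sort_eq_sminima hb⟩, ?_⟩⟩
  rintro ⟨σ, hσ⟩
  by_contra ho
  obtain ⟨j₀, w, hb', hlt⟩ := hb.exists_update_vnorm_lt ho
  have hminima : ∏ i : Fin k, sminima Fq Λ (i + 1) = ∏ j, vnorm Fq (u j) := by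
    rw [← Equiv.prod_comp σ fun j => vnorm Fq (u j)]
    exact prod_congr rfl fun i _ => (hσ i).symm
  exact (hb'.prod_sminima_le.trans_lt (prod_vnorm_update_lt hb'.1.ne_zero hlt)).ne hminima

/-- **Existence and characterization of orthogonal bases of sublattices.**
Every `k`-sublattice `Λ` of `K^n` (`K = Fq((x⁻¹))`, `R = Fq[x]`) has an orthogonal
`R`-basis; moreover an `R`-basis of `Λ` is orthogonal if and only if it is a basis of
successive minima, i.e. after reordering its elements realise the successive minima of
`Λ`. -/
theorem sublattice_orthogonal_basis (Fq : Type) [Field Fq] [Fintype Fq] (n k : ℕ)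
    (hk : 1 ≤ k) (hkn : k ≤ n)
    (Λ : Set (Fin n → LaurentSeries Fq)) (hΛ : IsKSublattice Fq k Λ) :
    (∃ u : Fin k → Fin n → LaurentSeries Fq, IsKSublatticeBasis Fq Λ u ∧ IsOrthTuple Fq u) ∧
      ∀ u : Fin k → Fin n → LaurentSeries Fq, IsKSublatticeBasis Fq Λ u →
        (IsOrthTuple Fq u ↔
          ∃ σ : Equiv.Perm (Fin k), ∀ i : Fin k, vnorm Fq (u (σ i)) = sminima Fq Λ (i + 1)) :=
  sublattice_orthogonal_basis_general Fq n k Λ hΛ
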